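/- Let (p,p') be a pair of coprime positive integers with p ≥ 2, set a = p'/p, let ε,ε' ∈ {0,1}, and let r,s,θ be integers with 1 ≤ r ≤ p−1, 0 ≤ s ≤ p'−1, θ ∈ ℤ. Then, at every point (τ,u,t) ∈ ℍ×ℂ×ℂ at which both sides are defined, η(τ)³ ϑ_{ε,ε'}(u;τ)^{−1} · A^{ε,ε'}_{r,s;θ}(τ,u,t) = (−1)^{εε'+(1−ε')p'} w^{3(1−2a)} q^{(ar−s−p')(θ+(1−ε)/2) − a(θ+(1−ε)/2)²} z^{(ar−s−p')−2a(θ+(1−ε)/2)} · [ A_{2p'}( u_{ε,ε'}+θτ, (rp'−sp−pp')τ; pτ ) − q^{r(s+p')} A_{2p'}( u_{ε,ε'}+(θ−r)τ, (−rp'−sp−pp')τ; pτ ) ], where q^α = e^{2πiτα}, z^α = e^{2πiuα}, w^α = e^{2πitα}. -/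

import Mathlib

open Complex MeasureTheory
open scoped Real

noncomputable section

/-- `e2 x = exp(2πi x)`. -/
def e2 (x : ℂ) : ℂ := Complex.exp (2 * (π : ℂ) * Complex.I * x)

/-- Dedekind dedekindEta function. -/
def dedekindEta (τ : ℂ) : ℂ := e2 (τ / 24) * ∏' n : ℕ, (1 - e2 (τ * (n + 1)))

/-- Jacobi theta with characteristics ε, ε' ∈ {0,1}. -/
def theta (ε ε' : ℕ) (u τ : ℂ) : ℂ :=
  e2 (u * ε / 2) * e2 (τ * ε / 8) *
    ∏' n : ℕ,
      ((1 - e2 (τ * (n + 1))) *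
        (1 + (-1 : ℂ) ^ ε' * e2 u * e2 (τ * ((n + 1 : ℂ) - (1 - (ε : ℂ)) / 2))) *
        (1 + (-1 : ℂ) ^ ε' * e2 (-u) * e2 (τ * ((n + 1 : ℂ) - (1 + (ε : ℂ)) / 2))))

/-- Normalized BPZ minimal-series character. -/
def chiBPZ (p p' r s : ℤ) (τ : ℂ) : ℂ :=
  (dedekindEta τ)⁻¹ * ∑' n : ℤ,
    (e2 (τ * ((p * p' : ℂ) * ((n : ℂ) + ((r * p' - s * p : ℤ) : ℂ) / (2 * p * p')) ^ 2)) -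
     e2 (τ * ((p * p' : ℂ) * ((n : ℂ) + ((-r * p' - s * p : ℤ) : ℂ) / (2 * p * p')) ^ 2)))

/-- The typical character function T^{ε,ε'}_{r,s;x}(τ,u,t). -/
def Tchar (p p' : ℤ) (ε ε' : ℕ) (r s : ℤ) (x : ℂ) (τ u t : ℂ) : ℂ :=
  (-1 : ℂ) ^ (ε * ε') *
    e2 (τ * (((p' : ℂ) / p) * (x - Complex.I * ε / 2) ^ 2)) *
    e2 (u * (2 * Complex.I * ((p' : ℂ) / p) * (x - Complex.I * ε / 2))) *
    e2 (t * (3 * (1 - 2 * ((p' : ℂ) / p)))) *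
    theta ε ε' u τ / (dedekindEta τ) ^ 2 * chiBPZ p p' r s τ

/-- The index set K_{p,p'}. -/
def Kset (p p' : ℤ) : Finset (ℤ × ℤ) :=
  (Finset.Icc 1 (p - 1) ×ˢ Finset.Icc 1 (p' - 1)).filter
    (fun rs => rs.1 * p' + rs.2 * p ≤ p * p')

/-- BPZ modular S-matrix. -/
def SBPZ (p p' r s r' s' : ℤ) : ℂ :=
  (Real.sqrt (8 / ((p : ℝ) * p')) : ℂ) * (-1 : ℂ) ^ ((r + s) * (r' + s')) *
    (Real.sin (π * ((p : ℝ) - p') * r * r' / p) : ℂ) *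
    (Real.sin (π * ((p : ℝ) - p') * s * s' / p') : ℂ)

/-- Typical-typical modular S-data. -/
def Stt (p p' : ℤ) (ε ε' : ℕ) (r s : ℤ) (x : ℂ) (r' s' : ℤ) (x' : ℂ) : ℂ :=
  Complex.I ^ (-((ε : ℤ) * ε')) * SBPZ p p' r s r' s' *
    (Real.sqrt (2 * ((p' : ℝ) / p)) : ℂ) *
    Complex.exp (-4 * (π : ℂ) * Complex.I * ((p' : ℂ) / p) *
      (x - Complex.I * ε / 2) * (x' - Complex.I * ε' / 2))


/-- λ_{r,s} = (r−1)/2 − sp/(2p'). -/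
def lam (p p' r s : ℤ) : ℝ := ((r : ℝ) - 1) / 2 - (s : ℝ) * p / (2 * p')

/-- The meromorphic function Ψ_{p,p';r,s}(u;τ). -/
def Psi (p p' r s : ℤ) (u τ : ℂ) : ℂ :=
  ∑' n : ℤ,
    (e2 (τ * ((p * p' : ℂ) * ((n : ℂ) + ((r * p' - s * p : ℤ) : ℂ) / (2 * p * p')) ^ 2)) /
        (1 - e2 u * e2 (τ * ((p * n : ℤ) : ℂ))) -
      e2 (τ * ((p * p' : ℂ) * ((n : ℂ) + ((-r * p' - s * p : ℤ) : ℂ) / (2 * p * p')) ^ 2)) /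
        (1 - e2 u * e2 (τ * ((p * n - r : ℤ) : ℂ))))

/-- u_{ε,ε'} = u + ((1−ε)/2)τ + (1−ε')/2. -/
def uEps (ε ε' : ℕ) (u τ : ℂ) : ℂ := u + (1 - (ε : ℂ)) / 2 * τ + (1 - (ε' : ℂ)) / 2

/-- The predicate that Ψ_{p,p';r,s}(u;τ) is defined at (u,τ), i.e. (u,τ) avoids the
divisor D_{p,r} (none of the denominators vanish). -/
def PsiDefined (p r : ℤ) (u τ : ℂ) : Prop :=
  ∀ n : ℤ, e2 u * e2 (τ * ((p * n : ℤ) : ℂ)) ≠ 1 ∧ e2 u * e2 (τ * ((p * n - r : ℤ) : ℂ)) ≠ 1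

/-- The atypical character function A^{ε,ε'}_{r,s;θ}(τ,u,t). -/
def Achar (p p' : ℤ) (ε ε' : ℕ) (r s θ : ℤ) (τ u t : ℂ) : ℂ :=
  (-1 : ℂ) ^ (ε * ε') *
    e2 (τ * (-(((p' : ℂ) / p) * ((lam p p' r s : ℂ) - θ + ε / 2) ^ 2))) *
    e2 (u * (2 * ((p' : ℂ) / p) * ((lam p p' r s : ℂ) - θ + ε / 2))) *
    e2 (t * (3 * (1 - 2 * ((p' : ℂ) / p)))) *
    theta ε ε' u τ / (dedekindEta τ) ^ 3 * Psi p p' r s (uEps ε ε' u τ + θ * τ) τ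

/-- The set of discrete spectra 𝒮_{p,p'} (as a set of triples (r,s,θ)). -/
def SpectraSet (p p' : ℤ) : Set (ℤ × ℤ × ℤ) :=
  {x | 1 ≤ x.1 ∧ x.1 ≤ p - 1 ∧ 0 ≤ x.2.1 ∧ x.2.1 ≤ p' - 1 ∧
    ∃ m : ℤ, 0 ≤ m ∧ m ≤ p - 1 ∧
      2 * m + 2 * p' - p = 2 * (x.1 - 2 * x.2.2) * p' - (2 * x.2.1 + 1) * p}

/-- Atypical-atypical modular S-data. -/
def Saa (p p' : ℤ) (ε ε' : ℕ) (x y : ℤ × ℤ × ℤ) : ℂ :=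
  Complex.I ^ (-((ε : ℤ) * ε')) *
    (-1 : ℂ) ^ ((1 - (ε' : ℤ)) * x.2.1 + (1 - (ε : ℤ)) * y.2.1) * (2 / (p : ℂ)) *
    (Real.sin (π * ((p' : ℝ) / p) * x.1 * y.1) : ℂ) *
    Complex.exp ((π : ℂ) * Complex.I * ((p' : ℂ) / p) *
      ((x.1 : ℂ) - 2 * x.2.2 - 1 + ε) * ((y.1 : ℂ) - 2 * y.2.2 - 1 + ε'))

/-- Atypical-typical modular S-data. -/
def Sat (p p' : ℤ) (ε ε' : ℕ) (r s θ : ℤ) (r' s' : ℤ) (x : ℝ) : ℂ :=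
  Complex.I ^ (-((ε : ℤ) * ε')) * (-1 : ℂ) ^ (r' * s + r * s') * (2 / (p : ℂ)) *
    (Real.sin (π * ((p' : ℝ) / p) * r * r') : ℂ) *
    ((Real.sin (π * s * s' / ((p' : ℝ) / p)) * Real.exp (2 * π * x) +
        Real.sin (2 * π * lam p p' r' ((1 + s) * s')) : ℝ) : ℂ) /
    ((Real.cosh (2 * π * x) - Real.cos (2 * π * lam p p' r' s') : ℝ) : ℂ) *
    Complex.exp (-4 * (π : ℂ) * ((p' : ℂ) / p) * ((lam p p' r s : ℂ) - θ + ε / 2) *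
      ((x : ℂ) - Complex.I * ε' / 2))

/-- Level K Appell–Lerch sum. -/
def AL (K : ℤ) (u v τ : ℂ) : ℂ :=
  e2 (u * K / 2) * ∑' n : ℤ,
    (-1 : ℂ) ^ (K * n) * e2 (v * n) * e2 (τ * (K * (n : ℂ) * ((n : ℂ) + 1) / 2)) /
      (1 - e2 u * e2 (τ * n))

/-- The predicate that the Appell–Lerch sum with first argument u and modular
variable τ has no vanishing denominators. -/
def ALDefined (u τ : ℂ) : Prop := ∀ n : ℤ, e2 u * e2 (τ * n) ≠ 1

/-! Completing the square in each Gaussian of `Ψ` turns its two halves into level-`2p'`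
Appell–Lerch series in the modular variable `pτ`, with first arguments `U` and `U - rτ`.
Both series converge absolutely: their numerators are Jacobi theta summands and their
denominators tend to `1` as `n → ∞` and to `∞` as `n → -∞`. After cancelling `η³ ϑ⁻¹`
(`η` has no zeros on `ℍ`) it remains to compare exponential prefactors, whose exponents
differ by an integer. -/

open Filter Asymptotics
open scoped Topology

lemma e2_add (x y : ℂ) : e2 (x + y) = e2 x * e2 y := by
  rw [e2, e2, e2, ← Complex.exp_add]; ring_nf

lemma e2_eq_of_eq_add_intCast {x y : ℂ} (n : ℤ) (h : x = y + n) : e2 x = e2 y := by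
  have h1 : e2 n = 1 := by
    rw [e2, mul_comm, Complex.exp_int_mul, Complex.exp_two_pi_mul_I, one_zpow]
  rw [h, e2_add, h1, mul_one]

lemma neg_one_zpow_eq_e2 (n : ℤ) : (-1 : ℂ) ^ n = e2 (n / 2) := by
  rw [e2, show 2 * (π : ℂ) * I * (n / 2) = n * (π * I) by ring, Complex.exp_int_mul,
    Complex.exp_pi_mul_I]

lemma neg_one_pow_eq_e2 (n : ℕ) : (-1 : ℂ) ^ n = e2 (n / 2) := by
  rw [← zpow_natCast, neg_one_zpow_eq_e2, Int.cast_natCast]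

lemma dedekindEta_eq_eta (τ : ℂ) : dedekindEta τ = ModularForm.eta τ := by
  rw [dedekindEta, ModularForm.eta, e2, Function.Periodic.qParam]
  congr 1
  · congr 1; push_cast; ring
  · refine tprod_congr fun n => ?_
    rw [ModularForm.eta_q_eq_cexp, e2]
    ring_nf

lemma dedekindEta_ne_zero {τ : ℂ} (hτ : 0 < τ.im) : dedekindEta τ ≠ 0 :=
  dedekindEta_eq_eta τ ▸ ModularForm.eta_ne_zero hτ

lemma tendsto_e2_nhds_zero {α : Type*} {l : Filter α} {f : α → ℂ}
    (hf : Tendsto (fun a => (f a).im) l atTop) : Tendsto (fun a => e2 (f a)) l (𝓝 0) := by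
  refine Complex.tendsto_exp_nhds_zero_iff.mpr ?_
  have hre : ∀ a, (2 * (π : ℂ) * I * f a).re = -(2 * π) * (f a).im := by
    intro a; simp [Complex.mul_re]
  simp only [hre]
  exact hf.const_mul_atTop_of_neg (by linarith [Real.pi_pos])

section Denominator

variable (u : ℂ) {τ : ℂ}

lemma tendsto_e2_add_mul_intCast_atTop (hτ : 0 < τ.im) :
    Tendsto (fun n : ℤ => e2 (u + τ * n)) atTop (𝓝 0) := by
  refine tendsto_e2_nhds_zero ?_
  have h : Tendsto (fun n : ℤ => u.im + τ.im * n) atTop atTop :=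
    tendsto_atTop_add_const_left _ _ (tendsto_intCast_atTop_atTop.const_mul_atTop hτ)
  exact h.congr fun n => by simp

lemma tendsto_e2_neg_add_mul_intCast_atBot (hτ : 0 < τ.im) :
    Tendsto (fun n : ℤ => e2 (-(u + τ * n))) atBot (𝓝 0) := by
  refine tendsto_e2_nhds_zero ?_
  have h : Tendsto (fun n : ℤ => -u.im + τ.im * -(n : ℝ)) atBot atTop :=
    tendsto_atTop_add_const_left _ _ ((tendsto_neg_atBot_atTop.comp
      (tendsto_intCast_atBot_iff.mpr tendsto_id)).const_mul_atTop hτ)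
  refine h.congr fun n => ?_
  simp only [Complex.neg_im, Complex.add_im, Complex.mul_im, Complex.intCast_re,
    Complex.intCast_im]
  ring

lemma isBigO_inv_one_sub_e2_one (hτ : 0 < τ.im) :
    (fun n : ℤ => (1 - e2 u * e2 (τ * n))⁻¹) =O[cofinite] fun _ => (1 : ℂ) := by
  simp only [← e2_add]
  rw [Int.cofinite_eq]
  refine IsBigO.sup ?_ ?_
  · have hbot := tendsto_e2_neg_add_mul_intCast_atBot u hτ
    have hlim := hbot.mul ((hbot.sub_const 1).inv₀ (by norm_num))
    rw [zero_mul] at hlim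
    refine (hlim.congr fun n => ?_).isBigO_one ℂ
    have hne : e2 (u + τ * n) ≠ 0 := Complex.exp_ne_zero _
    rw [show e2 (-(u + τ * n)) = (e2 (u + τ * n))⁻¹ by rw [e2, e2, ← Complex.exp_neg]; ring_nf]
    field_simp
  · have htop := tendsto_e2_add_mul_intCast_atTop u hτ
    have hlim : Tendsto (fun n : ℤ => (1 - e2 (u + τ * n))⁻¹) atTop (𝓝 1) := by
      simpa using (htop.const_sub 1).inv₀ (by norm_num)
    exact hlim.isBigO_one ℂ

end Denominator

def appellLerchTerm (K : ℤ) (u v τ : ℂ) (n : ℤ) : ℂ :=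
  (-1 : ℂ) ^ (K * n) * e2 (v * n) * e2 (τ * (K * (n : ℂ) * ((n : ℂ) + 1) / 2)) /
    (1 - e2 u * e2 (τ * n))

lemma AL_eq_tsum (K : ℤ) (u v τ : ℂ) :
    AL K u v τ = e2 (u * K / 2) * ∑' n : ℤ, appellLerchTerm K u v τ n := rfl

lemma appellLerch_numerator_eq_jacobiTheta₂_term (K n : ℤ) (v τ : ℂ) :
    (-1 : ℂ) ^ (K * n) * e2 (v * n) * e2 (τ * (K * (n : ℂ) * ((n : ℂ) + 1) / 2)) =
      jacobiTheta₂_term n (v + K / 2 + K * τ / 2) (K * τ) := by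
  rw [neg_one_zpow_eq_e2, ← e2_add, ← e2_add, e2, jacobiTheta₂_term]
  congr 1
  push_cast
  ring

lemma summable_appellLerchTerm {K : ℤ} (hK : 0 < K) (u v : ℂ) {τ : ℂ} (hτ : 0 < τ.im) :
    Summable (appellLerchTerm K u v τ) := by
  have hKτ : 0 < ((K : ℂ) * τ).im := by simpa using mul_pos (Int.cast_pos.mpr hK) hτ
  have hθ := (summable_jacobiTheta₂_term_iff (v + K / 2 + K * τ / 2) _).mpr hKτ
  refine summable_of_isBigO' hθ ?_
  have h := (isBigO_refl (fun n : ℤ => jacobiTheta₂_term n (v + K / 2 + K * τ / 2) (K * τ))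
    cofinite).mul (isBigO_inv_one_sub_e2_one u hτ)
  simp only [mul_one] at h
  refine h.congr_left fun n => ?_
  rw [appellLerchTerm, appellLerch_numerator_eq_jacobiTheta₂_term]
  exact (div_eq_mul_inv _ _).symm

lemma e2_gaussian_eq {p p' : ℤ} (hp : p ≠ 0) (hp' : p' ≠ 0) (a n : ℤ) (τ : ℂ) :
    e2 (τ * ((p * p' : ℂ) * ((n : ℂ) + (a : ℂ) / (2 * p * p')) ^ 2)) =
      e2 (τ * ((a : ℂ) ^ 2 / (4 * p * p'))) *
        ((-1 : ℂ) ^ (2 * p' * n) * e2 (((a - p * p' : ℤ) : ℂ) * τ * n) *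
          e2 (p * τ * (((2 * p' : ℤ) : ℂ) * n * ((n : ℂ) + 1) / 2))) := by
  rw [Even.neg_one_zpow ⟨p' * n, by ring⟩, one_mul, ← e2_add, ← e2_add]
  congr 1
  push_cast
  field_simp
  ring

lemma Psi_eq_tsum_appellLerchTerm {p p' : ℤ} (hp : 0 < p) (hp' : 0 < p') (r s : ℤ) (U : ℂ)
    {τ : ℂ} (hτ : 0 < τ.im) :
    Psi p p' r s U τ =
      e2 (τ * (((r * p' - s * p : ℤ) : ℂ) ^ 2 / (4 * p * p'))) *
          ∑' n : ℤ, appellLerchTerm (2 * p') U (((r * p' - s * p - p * p' : ℤ) : ℂ) * τ) (p * τ) n -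
        e2 (τ * (((-r * p' - s * p : ℤ) : ℂ) ^ 2 / (4 * p * p'))) *
          ∑' n : ℤ, appellLerchTerm (2 * p') (U - r * τ)
            (((-r * p' - s * p - p * p' : ℤ) : ℂ) * τ) (p * τ) n := by
  have hpτ : 0 < ((p : ℂ) * τ).im := by simpa using mul_pos (Int.cast_pos.mpr hp) hτ
  have hK : (0 : ℤ) < 2 * p' := by omega
  rw [← tsum_mul_left, ← tsum_mul_left, ← Summable.tsum_sub
    ((summable_appellLerchTerm hK _ _ hpτ).mul_left _)
    ((summable_appellLerchTerm hK _ _ hpτ).mul_left _), Psi]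
  refine tsum_congr fun n => ?_
  have hden₁ : τ * ((p * n : ℤ) : ℂ) = p * τ * n := by push_cast; ring
  have hden₂ : e2 U * e2 (τ * ((p * n - r : ℤ) : ℂ)) = e2 (U - r * τ) * e2 (p * τ * n) := by
    rw [← e2_add, ← e2_add]; push_cast; ring_nf
  rw [e2_gaussian_eq hp.ne' hp'.ne', e2_gaussian_eq hp.ne' hp'.ne', appellLerchTerm,
    appellLerchTerm, hden₁, hden₂]
  ring

def acharPrefactor (p p' : ℤ) (ε ε' : ℕ) (r s θ : ℤ) (τ u : ℂ) : ℂ :=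
  (-1 : ℂ) ^ (ε * ε') *
    e2 (τ * (-(((p' : ℂ) / p) * ((lam p p' r s : ℂ) - θ + ε / 2) ^ 2))) *
    e2 (u * (2 * ((p' : ℂ) / p) * ((lam p p' r s : ℂ) - θ + ε / 2)))

lemma eta_cube_mul_inv_theta_mul_Achar (p p' : ℤ) (ε ε' : ℕ) (r s θ : ℤ) {τ : ℂ}
    (hτ : 0 < τ.im) {u : ℂ} (t : ℂ) (hθ : theta ε ε' u τ ≠ 0) :
    dedekindEta τ ^ 3 * (theta ε ε' u τ)⁻¹ * Achar p p' ε ε' r s θ τ u t =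
      acharPrefactor p p' ε ε' r s θ τ u * e2 (t * (3 * (1 - 2 * ((p' : ℂ) / p)))) *
        Psi p p' r s (uEps ε ε' u τ + θ * τ) τ := by
  have hη := dedekindEta_ne_zero hτ
  rw [Achar, acharPrefactor]
  field_simp

/- In both prefactor identities the exponents differ by the integer `(ε' - 1) p'`: twice the
shift `(1 - ε') / 2` of `uEps`, times `p'`. -/

lemma acharPrefactor_mul_e2_eq_first {p p' : ℤ} (hp : p ≠ 0) (hp' : p' ≠ 0) (ε ε' : ℕ)
    (r s θ : ℤ) (τ u t : ℂ) :
    acharPrefactor p p' ε ε' r s θ τ u * e2 (t * (3 * (1 - 2 * ((p' : ℂ) / p)))) *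
        e2 (τ * (((r * p' - s * p : ℤ) : ℂ) ^ 2 / (4 * p * p'))) =
      (-1 : ℂ) ^ ((ε : ℤ) * ε' + (1 - (ε' : ℤ)) * p') *
        e2 (t * (3 * (1 - 2 * ((p' : ℂ) / p)))) *
        e2 (τ * ((((p' : ℂ) / p) * r - s - p') * ((θ : ℂ) + (1 - (ε : ℂ)) / 2) -
          ((p' : ℂ) / p) * ((θ : ℂ) + (1 - (ε : ℂ)) / 2) ^ 2)) *
        e2 (u * ((((p' : ℂ) / p) * r - s - p') -
          2 * ((p' : ℂ) / p) * ((θ : ℂ) + (1 - (ε : ℂ)) / 2))) *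
        e2 ((uEps ε ε' u τ + θ * τ) * ((2 * p' : ℤ) : ℂ) / 2) := by
  rw [acharPrefactor, neg_one_pow_eq_e2, neg_one_zpow_eq_e2]
  simp only [← e2_add]
  refine e2_eq_of_eq_add_intCast ((ε' : ℤ) * p' - p') ?_
  simp only [lam, uEps]
  push_cast
  field_simp
  ring

lemma acharPrefactor_mul_e2_eq_second {p p' : ℤ} (hp : p ≠ 0) (hp' : p' ≠ 0) (ε ε' : ℕ)
    (r s θ : ℤ) (τ u t : ℂ) :
    acharPrefactor p p' ε ε' r s θ τ u * e2 (t * (3 * (1 - 2 * ((p' : ℂ) / p)))) *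
        e2 (τ * (((-r * p' - s * p : ℤ) : ℂ) ^ 2 / (4 * p * p'))) =
      (-1 : ℂ) ^ ((ε : ℤ) * ε' + (1 - (ε' : ℤ)) * p') *
        e2 (t * (3 * (1 - 2 * ((p' : ℂ) / p)))) *
        e2 (τ * ((((p' : ℂ) / p) * r - s - p') * ((θ : ℂ) + (1 - (ε : ℂ)) / 2) -
          ((p' : ℂ) / p) * ((θ : ℂ) + (1 - (ε : ℂ)) / 2) ^ 2)) *
        e2 (u * ((((p' : ℂ) / p) * r - s - p') -
          2 * ((p' : ℂ) / p) * ((θ : ℂ) + (1 - (ε : ℂ)) / 2))) *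
        e2 (τ * ((r * (s + p') : ℤ) : ℂ)) *
        e2 ((uEps ε ε' u τ + θ * τ - r * τ) * ((2 * p' : ℤ) : ℂ) / 2) := by
  rw [acharPrefactor, neg_one_pow_eq_e2, neg_one_zpow_eq_e2]
  simp only [← e2_add]
  refine e2_eq_of_eq_add_intCast ((ε' : ℤ) * p' - p') ?_
  simp only [lam, uEps]
  push_cast
  field_simp
  ring

theorem atypical_via_appell_lerch_general (p p' : ℤ) (hp : 2 ≤ p) (hp' : 1 ≤ p')
    (ε ε' : ℕ)
    (r s θ : ℤ)
    (τ : ℂ) (hτ : 0 < τ.im) (u t : ℂ)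
    (hθne : theta ε ε' u τ ≠ 0) :
    dedekindEta τ ^ 3 * (theta ε ε' u τ)⁻¹ * Achar p p' ε ε' r s θ τ u t =
      (-1 : ℂ) ^ ((ε : ℤ) * ε' + (1 - (ε' : ℤ)) * p') *
        e2 (t * (3 * (1 - 2 * ((p' : ℂ) / p)))) *
        e2 (τ * ((((p' : ℂ) / p) * r - s - p') * ((θ : ℂ) + (1 - (ε : ℂ)) / 2) -
          ((p' : ℂ) / p) * ((θ : ℂ) + (1 - (ε : ℂ)) / 2) ^ 2)) *
        e2 (u * ((((p' : ℂ) / p) * r - s - p') - 2 * ((p' : ℂ) / p) * ((θ : ℂ) + (1 - (ε : ℂ)) / 2))) *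
        (AL (2 * p') (uEps ε ε' u τ + θ * τ) (((r * p' - s * p - p * p' : ℤ) : ℂ) * τ) (p * τ) -
          e2 (τ * ((r * (s + p') : ℤ) : ℂ)) *
            AL (2 * p') (uEps ε ε' u τ + (θ - r) * τ)
              (((-r * p' - s * p - p * p' : ℤ) : ℂ) * τ) (p * τ)) := by
  have hp0 : p ≠ 0 := by omega
  have hp'0 : p' ≠ 0 := by omega
  rw [eta_cube_mul_inv_theta_mul_Achar p p' ε ε' r s θ hτ t hθne,
    Psi_eq_tsum_appellLerchTerm (by omega) (by omega) r s _ hτ, AL_eq_tsum, AL_eq_tsum,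
    show uEps ε ε' u τ + (θ - r : ℂ) * τ = uEps ε ε' u τ + θ * τ - r * τ by ring]
  rw [mul_sub (acharPrefactor p p' ε ε' r s θ τ u * _),
    ← mul_assoc (acharPrefactor p p' ε ε' r s θ τ u * _), acharPrefactor_mul_e2_eq_first hp0 hp'0,
    ← mul_assoc (acharPrefactor p p' ε ε' r s θ τ u * _), acharPrefactor_mul_e2_eq_second hp0 hp'0]
  ring

/-- Expression of the atypical characters in terms of Appell–Lerch sums. -/
theorem atypical_via_appell_lerch (p p' : ℤ) (hp : 2 ≤ p) (hp' : 1 ≤ p')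
    (hco : IsCoprime p p') (ε ε' : ℕ) (hε : ε ≤ 1) (hε' : ε' ≤ 1)
    (r s θ : ℤ) (hr1 : 1 ≤ r) (hr2 : r ≤ p - 1) (hs1 : 0 ≤ s) (hs2 : s ≤ p' - 1)
    (τ : ℂ) (hτ : 0 < τ.im) (u t : ℂ)
    (hθne : theta ε ε' u τ ≠ 0)
    (hdef : PsiDefined p r (uEps ε ε' u τ + θ * τ) τ)
    (hdef1 : ALDefined (uEps ε ε' u τ + θ * τ) (p * τ))
    (hdef2 : ALDefined (uEps ε ε' u τ + (θ - r) * τ) (p * τ)) :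
    dedekindEta τ ^ 3 * (theta ε ε' u τ)⁻¹ * Achar p p' ε ε' r s θ τ u t =
      (-1 : ℂ) ^ ((ε : ℤ) * ε' + (1 - (ε' : ℤ)) * p') *
        e2 (t * (3 * (1 - 2 * ((p' : ℂ) / p)))) *
        e2 (τ * ((((p' : ℂ) / p) * r - s - p') * ((θ : ℂ) + (1 - (ε : ℂ)) / 2) -
          ((p' : ℂ) / p) * ((θ : ℂ) + (1 - (ε : ℂ)) / 2) ^ 2)) *
        e2 (u * ((((p' : ℂ) / p) * r - s - p') - 2 * ((p' : ℂ) / p) * ((θ : ℂ) + (1 - (ε : ℂ)) / 2))) *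
        (AL (2 * p') (uEps ε ε' u τ + θ * τ) (((r * p' - s * p - p * p' : ℤ) : ℂ) * τ) (p * τ) -
          e2 (τ * ((r * (s + p') : ℤ) : ℂ)) *
            AL (2 * p') (uEps ε ε' u τ + (θ - r) * τ)
              (((-r * p' - s * p - p * p' : ℤ) : ℂ) * τ) (p * τ)) :=
  atypical_via_appell_lerch_general p p' hp hp' ε ε' r s θ τ hτ u t hθne

end
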